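/- Let Δ be a digraph on n vertices with Hermitian adjacency matrix H = H_ω(Δ) for ω = (−1 ± i√3)/2, and let λ ∉ {0,−1} be a non-main eigenvalue of H of multiplicity n − d. Then n ≤ d(d+5)/2. -/

import Mathlib

/-!
Put `N = H - λ I`; its kernel is the `λ`-eigenspace, so `rank N ≤ d`. Since `ω² = ω̄`, every
entry of `H` satisfies `H_xy² = H_yx`, and `H` has zero diagonal, so
`N ⊙ N - Nᵀ = (λ² + λ) I`, which is invertible because `λ ∉ {0, -1}`. The Hadamard square of
a matrix of rank `d` has rank at most `d(d+1)/2`, hence `n ≤ d(d+1)/2 + d ≤ d(d+5)/2`.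
-/

open Matrix

/-- The Hermitian adjacency matrix `H_ω` of a digraph with arc relation `E`:
entry `1` on digons, `ω` on forward-only arcs, `conj ω` on backward-only arcs, `0` otherwise. -/
noncomputable def hermAdj (n : ℕ) (E : Fin n → Fin n → Prop) [DecidableRel E] (ω : ℂ) :
    Matrix (Fin n) (Fin n) ℂ :=
  Matrix.of fun x y =>
    if E x y ∧ E y x then 1 else if E x y then ω else if E y x then starRingEnd ℂ ω else 0

open Module Pointwise

namespace Submodule

variable {K A : Type*} [Field K] [CommRing A] [Algebra K A]

/-- `W * W` is spanned by the products `v i * v j` of basis vectors, and by commutativity only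
the unordered pairs `{i, j}` are needed. -/
theorem finrank_mul_self_le (W : Submodule K A) [FiniteDimensional K W] :
    finrank K ↥(W * W) ≤ (finrank K W + 1).choose 2 := by
  set b := Module.finBasis K W
  set v : Fin (finrank K W) → A := W.subtype ∘ b
  have hW : W = span K (Set.range v) := by
    rw [Set.range_comp, ← Submodule.map_span, b.span_eq, Submodule.map_top,
      Submodule.range_subtype]
  let prod : Sym2 (Fin (finrank K W)) → A :=
    Sym2.lift ⟨fun i j => v i * v j, fun _ _ => mul_comm _ _⟩
  have hprod : Set.range v * Set.range v ⊆ Set.range prod := by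
    rintro _ ⟨_, ⟨i, rfl⟩, _, ⟨j, rfl⟩, rfl⟩
    exact ⟨s(i, j), rfl⟩
  have hWW : W * W = span K (Set.range v * Set.range v) := by rw [← span_mul_span, ← hW]
  have : FiniteDimensional K (span K (Set.range prod)) :=
    FiniteDimensional.span_of_finite K (Set.finite_range prod)
  calc finrank K ↥(W * W) ≤ finrank K (span K (Set.range prod)) :=
        finrank_mono (hWW.le.trans (span_mono hprod))
    _ ≤ Fintype.card (Sym2 (Fin (finrank K W))) := finrank_range_le_card prod
    _ = (finrank K W + 1).choose 2 := by rw [Sym2.card, Fintype.card_fin]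

end Submodule

namespace Matrix

variable {ι m n K : Type*} [Fintype ι] [DecidableEq ι] [Fintype n] [Field K]

theorem rank_sub_le (A B : Matrix m n K) : (A - B).rank ≤ A.rank + B.rank := by
  have hmul : (A - B).mulVecLin = A.mulVecLin + -B.mulVecLin :=
    LinearMap.ext fun v => sub_mulVec A B v |>.trans (sub_eq_add_neg _ _)
  rw [rank, rank, rank, hmul]
  calc finrank K (LinearMap.range (A.mulVecLin + -B.mulVecLin))
      ≤ finrank K ↥(LinearMap.range A.mulVecLin ⊔ LinearMap.range (-B.mulVecLin)) :=
        Submodule.finrank_mono (LinearMap.range_add_le _ _)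
    _ ≤ _ := by
        rw [LinearMap.range_neg]
        exact Submodule.finrank_add_le_finrank_add_finrank _ _

theorem rank_hadamard_self_le [Fintype m] (A : Matrix m n K) :
    (A ⊙ A).rank ≤ (A.rank + 1).choose 2 := by
  rw [rank_eq_finrank_span_cols, rank_eq_finrank_span_cols]
  set W := Submodule.span K (Set.range A.col)
  refine le_trans (Submodule.finrank_mono ?_) W.finrank_mul_self_le
  rw [Submodule.span_le]
  rintro _ ⟨j, rfl⟩
  have hcol : (A ⊙ A).col j = A.col j * A.col j := rfl
  rw [hcol]
  exact Submodule.mul_mem_mul (Submodule.subset_span ⟨j, rfl⟩)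
    (Submodule.subset_span ⟨j, rfl⟩)

theorem card_le_of_hadamard_self_sub_transpose_eq_smul_one (A : Matrix ι ι K) {c : K}
    (hc : c ≠ 0) (hA : A ⊙ A - Aᵀ = c • 1) :
    Fintype.card ι ≤ (A.rank + 1).choose 2 + A.rank :=
  calc Fintype.card ι = (c • (1 : Matrix ι ι K)).rank := by
        rw [rank_smul_of_mem_nonZeroDivisors _ (mem_nonZeroDivisors_of_ne_zero hc), rank_one]
    _ = (A ⊙ A - Aᵀ).rank := by rw [hA]
    _ ≤ (A ⊙ A).rank + Aᵀ.rank := rank_sub_le _ _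
    _ ≤ (A.rank + 1).choose 2 + A.rank := add_le_add A.rank_hadamard_self_le A.rank_transpose.le

theorem rank_sub_smul_one_add_finrank_eigenspace (A : Matrix ι ι K) (μ : K) :
    (A - μ • 1).rank + finrank K (Module.End.eigenspace (toLin' A) μ) = Fintype.card ι := by
  have hlin : toLin' (A - μ • 1) = toLin' A - μ • 1 := by
    rw [map_sub, map_smul, toLin'_one, Module.End.one_eq_id]
  rw [Module.End.eigenspace_def, rank, ← toLin'_apply', hlin,
    LinearMap.finrank_range_add_finrank_ker, Module.finrank_fintype_fun_eq_card]

end Matrix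

theorem sq_eq_conj_of_primitive_cube_root (ω : ℂ)
    (hω : ω = (-1 + Complex.I * Real.sqrt 3) / 2 ∨ ω = (-1 - Complex.I * Real.sqrt 3) / 2) :
    ω ^ 2 = starRingEnd ℂ ω := by
  have h3 : ((Real.sqrt 3 : ℝ) : ℂ) ^ 2 = 3 := by
    rw [← Complex.ofReal_pow, Real.sq_sqrt (by norm_num : (3 : ℝ) ≥ 0)]
    norm_num
  rcases hω with rfl | rfl <;>
  · simp only [map_div₀, map_add, map_sub, _root_.map_mul, map_neg, _root_.map_one, map_ofNat,
      Complex.conj_I, Complex.conj_ofReal]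
    linear_combination (-(1 : ℂ) / 4) * h3 + (((Real.sqrt 3 : ℝ) : ℂ) ^ 2 / 4) * Complex.I_sq

section hermAdj

variable {n : ℕ} {E : Fin n → Fin n → Prop} [DecidableRel E] {ω : ℂ}

theorem hermAdj_apply_self {x : Fin n} (hx : ¬ E x x) : hermAdj n E ω x x = 0 := by
  simp [hermAdj, hx]

theorem hermAdj_apply_sq (hω : ω ^ 2 = starRingEnd ℂ ω) (x y : Fin n) :
    hermAdj n E ω x y ^ 2 = hermAdj n E ω y x := by
  have hω' : starRingEnd ℂ ω ^ 2 = ω := by rw [← map_pow, hω, Complex.conj_conj]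
  by_cases hxy : E x y <;> by_cases hyx : E y x <;> simp [hermAdj, hxy, hyx, hω, hω']

theorem hermAdj_sub_smul_one_hadamard_self_sub_transpose (hirr : ∀ x, ¬ E x x)
    (hω : ω ^ 2 = starRingEnd ℂ ω) (μ : ℂ) :
    (hermAdj n E ω - μ • 1) ⊙ (hermAdj n E ω - μ • 1) - (hermAdj n E ω - μ • 1)ᵀ =
      (μ ^ 2 + μ) • 1 := by
  ext x y
  by_cases hxy : x = y
  · subst hxy
    simp [hermAdj_apply_self (hirr x)]
    ring
  · simp only [Matrix.sub_apply, hadamard_apply, transpose_apply, Matrix.smul_apply,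
      one_apply_ne hxy, one_apply_ne (Ne.symm hxy), smul_zero, sub_zero]
    rw [← sq, hermAdj_apply_sq hω, sub_self]

end hermAdj

theorem stmt_18_general (n d : ℕ) (E : Fin n → Fin n → Prop) [DecidableRel E]
    (hirr : ∀ x, ¬ E x x) (ω : ℂ)
    (hω : ω = (-1 + Complex.I * Real.sqrt 3) / 2 ∨ ω = (-1 - Complex.I * Real.sqrt 3) / 2)
    (lam : ℝ) (h0 : lam ≠ 0) (h1 : lam ≠ -1)
    (hmult : Module.finrank ℂ
      (Module.End.eigenspace (Matrix.toLin' (hermAdj n E ω)) (lam : ℂ)) = n - d) :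
    n ≤ d * (d + 5) / 2 := by
  set N := hermAdj n E ω - (lam : ℂ) • 1
  have hrank : N.rank ≤ d := by
    have h : N.rank + (n - d) = n := hmult ▸
      ((hermAdj n E ω).rank_sub_smul_one_add_finrank_eigenspace (lam : ℂ)).trans
        (Fintype.card_fin n)
    omega
  have hc : (lam : ℂ) ^ 2 + lam ≠ 0 := by
    have hne : lam * (lam + 1) ≠ 0 := mul_ne_zero h0 fun h => h1 (by linarith)
    rw [mul_add_one, ← sq] at hne
    exact_mod_cast hne
  have hn := N.card_le_of_hadamard_self_sub_transpose_eq_smul_one hc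
    (hermAdj_sub_smul_one_hadamard_self_sub_transpose hirr
      (sq_eq_conj_of_primitive_cube_root ω hω) _)
  rw [Fintype.card_fin] at hn
  calc n ≤ (N.rank + 1).choose 2 + N.rank := hn
    _ ≤ (d + 1).choose 2 + d := by gcongr
    _ ≤ d * (d + 5) / 2 := by
      rw [Nat.choose_two_right, Nat.add_sub_cancel, Nat.le_div_iff_mul_le two_pos]
      nlinarith [Nat.div_mul_le_self ((d + 1) * d) 2]

/-- For a digraph on `n` vertices with Hermitian adjacency matrix `H_ω`,
`ω = (−1 ± i√3)/2`, and `λ ∉ {0,−1}` a non-main eigenvalue of multiplicity `n − d`,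
one has `n ≤ d(d+5)/2`. -/
theorem stmt_18 (n d : ℕ) (E : Fin n → Fin n → Prop) [DecidableRel E]
    (hirr : ∀ x, ¬ E x x) (ω : ℂ)
    (hω : ω = (-1 + Complex.I * Real.sqrt 3) / 2 ∨ ω = (-1 - Complex.I * Real.sqrt 3) / 2)
    (lam : ℝ) (h0 : lam ≠ 0) (h1 : lam ≠ -1)
    (heig : Module.End.HasEigenvalue (Matrix.toLin' (hermAdj n E ω)) (lam : ℂ))
    (hnonmain : ∀ v ∈ Module.End.eigenspace (Matrix.toLin' (hermAdj n E ω)) (lam : ℂ),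
      ∑ i, v i = 0)
    (hdn : d ≤ n)
    (hmult : Module.finrank ℂ
      (Module.End.eigenspace (Matrix.toLin' (hermAdj n E ω)) (lam : ℂ)) = n - d) :
    n ≤ d * (d + 5) / 2 :=
  stmt_18_general n d E hirr ω hω lam h0 h1 hmult
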